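/- arXiv:1510.01149 — 2 statements merged into one kernel-verified Lean document; each statement's English description precedes it below -/
import Mathlib

section
/- Let A ∈ ℝ^{n×n} be diagonalizable over ℂ and suppose its eigenvalue λ₁ of maximal real part is simple, real, negative, and satisfies λ₁ > Re(λⱼ) for every other eigenvalue λⱼ. Then there exists an invertible matrix S ∈ ℝ^{n×n} such that the system ż = S⁻¹AS z is eventually positive, i.e., for every z ∈ ℝⁿ with z ≥ 0 entrywise there exists τ₀ ≥ 0 such that e^{(S⁻¹AS)t} z ≥ 0 entrywise for all t ≥ τ₀. -/
/-!
Diagonalising `A = P D P⁻¹` over `ℂ`, the rescaled flow `e^{-λ₁ t} e^{tA}` converges to the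
spectral projection onto the eigenline of `λ₁`, since every other mode decays like
`e^{(Re λⱼ - λ₁) t}`. Because `λ₁` is real and simple, this projection is
`z ↦ (w ⬝ z / w ⬝ v) v` for real right and left eigenvectors `v`, `w` with `w ⬝ v ≠ 0`.
Choosing `S` with `S 𝟙 = v` and `wᵀ S` constant turns the limit of `e^{-λ₁ t} e^{t S⁻¹AS} z`
into the mean of `z` times `𝟙`, which is positive for `z ≥ 0`, `z ≠ 0`.
-/

open Matrix Filter Topology NormedSpace Polynomial

theorem Pi.eq_single_of_forall_mul_eq {ι R : Type*} [DecidableEq ι] [MulZeroClass R]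
    [IsRightCancelMulZero R] {d y : ι → R} {i₀ : ι} (hd : ∀ j, d j = d i₀ → j = i₀)
    (h : ∀ j, d j * y j = d i₀ * y j) : y = Pi.single i₀ (y i₀) := by
  funext j
  rcases eq_or_ne j i₀ with rfl | hj
  · simp
  · rw [Pi.single_eq_of_ne hj]
    exact (mul_eq_mul_right_iff.mp (h j)).resolve_left (mt (hd j) hj)

theorem Complex.ofReal_comp_smul {α : Type*} (r : ℝ) (x : α → ℝ) :
    Complex.ofReal ∘ (r • x) = (r : ℂ) • (Complex.ofReal ∘ x) := by
  ext i
  simp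

theorem Complex.tendsto_exp_ofReal_mul_atTop_nhds_zero {c : ℂ} (hc : c.re < 0) :
    Tendsto (fun t : ℝ => Complex.exp (t * c)) atTop (𝓝 0) := by
  rw [Complex.tendsto_exp_nhds_zero_iff]
  simpa using tendsto_id.atTop_mul_const_of_neg hc

theorem Filter.Tendsto.eventually_nonneg_of_smul {α ι : Type*} [Finite ι] {l : Filter α}
    {c : α → ℝ} {f : α → ι → ℝ} {y : ι → ℝ} (h : Tendsto (fun a => c a • f a) l (𝓝 y))
    (hc : ∀ a, 0 < c a) (hy : ∀ i, 0 < y i) : ∀ᶠ a in l, 0 ≤ f a := by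
  filter_upwards [eventually_all.mpr fun i => (tendsto_pi_nhds.mp h i).eventually
    (eventually_gt_nhds (hy i))] with a ha i
  exact (pos_of_mul_pos_right (ha i) (hc a).le).le

namespace Matrix

section Complexification

variable {ι : Type*} [Fintype ι]

theorem ofReal_comp_mulVec (M : Matrix ι ι ℝ) (x : ι → ℝ) :
    Complex.ofReal ∘ (M *ᵥ x) = M.map Complex.ofReal *ᵥ (Complex.ofReal ∘ x) :=
  funext (RingHom.map_mulVec Complex.ofRealHom M x)

theorem ofReal_comp_vecMul (M : Matrix ι ι ℝ) (x : ι → ℝ) :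
    Complex.ofReal ∘ (x ᵥ* M) = (Complex.ofReal ∘ x) ᵥ* M.map Complex.ofReal :=
  funext (RingHom.map_vecMul Complex.ofRealHom M x)

theorem ofReal_dotProduct (x y : ι → ℝ) :
    ((x ⬝ᵥ y : ℝ) : ℂ) = (Complex.ofReal ∘ x) ⬝ᵥ (Complex.ofReal ∘ y) :=
  RingHom.map_dotProduct Complex.ofRealHom x y

end Complexification

variable {ι : Type*} [Fintype ι] [DecidableEq ι]

section RankOneUpdate

variable {K : Type*} [Field K]

theorem det_one_add_vecMulVec (u v : ι → K) : (1 + vecMulVec u v).det = 1 + v ⬝ᵥ u := by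
  rw [vecMulVec_eq Unit, det_one_add_replicateCol_mul_replicateRow]

theorem one_add_vecMulVec_mulVec (u v x : ι → K) :
    (1 + vecMulVec u v) *ᵥ x = x + (v ⬝ᵥ x) • u := by
  rw [add_mulVec, one_mulVec, vecMulVec_mulVec, op_smul_eq_smul]

theorem vecMul_one_add_vecMulVec (u v x : ι → K) :
    x ᵥ* (1 + vecMulVec u v) = x + (x ⬝ᵥ u) • v := by
  rw [vecMul_add, vecMul_one, vecMul_vecMulVec]

theorem exists_isUnit_det_mulVec_one_eq {v : ι → K} (hv : v ≠ 0) :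
    ∃ S : Matrix ι ι K, IsUnit S.det ∧ S *ᵥ 1 = v := by
  obtain ⟨b, hb⟩ := Function.ne_iff.mp hv
  refine ⟨1 + vecMulVec (v - 1) (Pi.single b 1), ?_, ?_⟩
  · simpa [det_one_add_vecMulVec, single_dotProduct] using hb
  · simp [one_add_vecMulVec_mulVec, single_dotProduct]

theorem exists_isUnit_det_mulVec_eq_self_vecMul_eq {u w w' : ι → K}
    (h : w ⬝ᵥ u = w' ⬝ᵥ u) (hu : w ⬝ᵥ u ≠ 0) :
    ∃ S : Matrix ι ι K, IsUnit S.det ∧ S *ᵥ u = u ∧ w ᵥ* S = w' := by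
  have hd : (w' - w) ⬝ᵥ u = 0 := by rw [sub_dotProduct, h, sub_self]
  refine ⟨1 + vecMulVec ((w ⬝ᵥ u)⁻¹ • u) (w' - w), ?_, ?_, ?_⟩
  · rw [det_one_add_vecMulVec, dotProduct_smul, hd, smul_zero, add_zero]
    exact isUnit_one
  · rw [one_add_vecMulVec_mulVec, hd, zero_smul, add_zero]
  · rw [vecMul_one_add_vecMulVec, dotProduct_smul, smul_eq_mul, inv_mul_cancel₀ hu, one_smul,
      add_sub_cancel]

theorem exists_isUnit_det_mulVec_one_eq_vecMul_eq {v w w' : ι → K}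
    (h : w ⬝ᵥ v = w' ⬝ᵥ 1) (hv : w ⬝ᵥ v ≠ 0) :
    ∃ S : Matrix ι ι K, IsUnit S.det ∧ S *ᵥ 1 = v ∧ w ᵥ* S = w' := by
  obtain ⟨S₁, hS₁, hS₁v⟩ := exists_isUnit_det_mulVec_one_eq (v := v) (by rintro rfl; simp at hv)
  have hw : w ᵥ* S₁ ⬝ᵥ 1 = w ⬝ᵥ v := by rw [← dotProduct_mulVec, hS₁v]
  obtain ⟨S₂, hS₂, hS₂1, hS₂w⟩ :=
    exists_isUnit_det_mulVec_eq_self_vecMul_eq (w := w ᵥ* S₁) (w' := w') (hw.trans h) (hw ▸ hv)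
  refine ⟨S₁ * S₂, by simpa [det_mul] using hS₁.mul hS₂, ?_, ?_⟩
  · rw [← mulVec_mulVec, hS₂1, hS₁v]
  · rw [← vecMul_vecMul, hS₂w]

end RankOneUpdate

section Eigenvectors

theorem existsUnique_eq_of_rootMultiplicity_charpoly_diagonal_eq_one {R : Type*} [CommRing R]
    [IsDomain R] [DecidableEq R] {d : ι → R} {a : R}
    (h : rootMultiplicity a (diagonal d).charpoly = 1) : ∃! i, d i = a := by
  have hroots : (diagonal d).charpoly.roots = Finset.univ.val.map d := by
    rw [charpoly_diagonal, Finset.prod_eq_multiset_prod, ← roots_multiset_prod_X_sub_C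
      (Finset.univ.val.map d), Multiset.map_map]
    rfl
  rw [← count_roots, hroots, Multiset.count_map, ← Finset.filter_val, ← Finset.card_def,
    Finset.card_eq_one_iff_existsUnique] at h
  simpa [eq_comm] using h

theorem exists_eq_and_re_lt_of_rootMultiplicity_charpoly_eq_one {M P : Matrix ι ι ℂ}
    (hP : IsUnit P.det) {d : ι → ℂ} (hM : M = P * diagonal d * P⁻¹) {l : ℝ}
    (hsimple : rootMultiplicity (l : ℂ) M.charpoly = 1)
    (hdom : ∀ μ : ℂ, M.charpoly.IsRoot μ → μ ≠ l → μ.re < l) :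
    ∃ i₀, d i₀ = l ∧ ∀ j ≠ i₀, (d j).re < l := by
  have hchar : M.charpoly = (diagonal d).charpoly := by
    rw [hM, charpoly_mul_comm, ← Matrix.mul_assoc, nonsing_inv_mul _ hP, Matrix.one_mul]
  obtain ⟨i₀, hi₀, hunique⟩ :=
    existsUnique_eq_of_rootMultiplicity_charpoly_diagonal_eq_one (hchar ▸ hsimple)
  refine ⟨i₀, hi₀, fun j hj => hdom _ ?_ fun h => hj (hunique j h)⟩
  simp [hchar, charpoly_diagonal, eval_prod, Finset.prod_eq_zero_iff, sub_eq_zero]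

theorem exists_mulVec_eq_smul_of_isRoot_charpoly {K : Type*} [Field K] (A : Matrix ι ι K) {μ : K}
    (h : A.charpoly.IsRoot μ) : ∃ v ≠ 0, A *ᵥ v = μ • v := by
  rw [IsRoot, eval_charpoly, ← exists_mulVec_eq_zero_iff] at h
  obtain ⟨v, hv0, hv⟩ := h
  refine ⟨v, hv0, ?_⟩
  rw [sub_mulVec, sub_eq_zero] at hv
  simpa using hv.symm

theorem eq_mul_diagonal_mul_nonsing_inv_of_isDiag {R : Type*} [CommRing R] {M P : Matrix ι ι R}
    (hP : IsUnit P.det) (h : (P⁻¹ * M * P).IsDiag) :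
    M = P * diagonal (P⁻¹ * M * P).diag * P⁻¹ := by
  rw [h.diagonal_diag, ← Matrix.mul_assoc, ← Matrix.mul_assoc, mul_nonsing_inv _ hP,
    Matrix.one_mul, Matrix.mul_assoc, mul_nonsing_inv _ hP, Matrix.mul_one]

variable {K : Type*} [Field K] {P : Matrix ι ι K} {d : ι → K} {i₀ : ι}

theorem eq_mulVec_single_of_mulVec_eq_smul (hP : IsUnit P.det) (hd : ∀ j, d j = d i₀ → j = i₀)
    {u : ι → K} (hu : (P * diagonal d * P⁻¹) *ᵥ u = d i₀ • u) :
    u = P *ᵥ Pi.single i₀ ((P⁻¹ *ᵥ u) i₀) := by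
  have hy : diagonal d *ᵥ (P⁻¹ *ᵥ u) = d i₀ • (P⁻¹ *ᵥ u) := by
    rw [← mulVec_smul, ← hu, mulVec_mulVec, mulVec_mulVec, ← Matrix.mul_assoc,
      ← Matrix.mul_assoc, nonsing_inv_mul _ hP, Matrix.one_mul]
  rw [← Pi.eq_single_of_forall_mul_eq hd (fun j => by
    simpa only [mulVec_diagonal, Pi.smul_apply, smul_eq_mul] using congrFun hy j), mulVec_mulVec,
    mul_nonsing_inv _ hP, one_mulVec]

theorem eq_single_vecMul_of_vecMul_eq_smul (hP : IsUnit P.det) (hd : ∀ j, d j = d i₀ → j = i₀)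
    {f : ι → K} (hf : f ᵥ* (P * diagonal d * P⁻¹) = d i₀ • f) :
    f = Pi.single i₀ ((f ᵥ* P) i₀) ᵥ* P⁻¹ := by
  have hg : (f ᵥ* P) ᵥ* diagonal d = d i₀ • (f ᵥ* P) := by
    rw [vecMul_vecMul, ← smul_vecMul, ← hf, vecMul_vecMul, Matrix.mul_assoc,
      nonsing_inv_mul _ hP, Matrix.mul_one]
  rw [← Pi.eq_single_of_forall_mul_eq hd (fun j => by
    simpa only [vecMul_diagonal, Pi.smul_apply, smul_eq_mul, mul_comm] using congrFun hg j),
    vecMul_vecMul, mul_nonsing_inv _ hP, vecMul_one]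

theorem dotProduct_eq_mul_of_vecMul_eq_smul (hP : IsUnit P.det) (hd : ∀ j, d j = d i₀ → j = i₀)
    {f : ι → K} (hf : f ᵥ* (P * diagonal d * P⁻¹) = d i₀ • f) (x : ι → K) :
    f ⬝ᵥ x = (f ᵥ* P) i₀ * (P⁻¹ *ᵥ x) i₀ := by
  conv_lhs => rw [eq_single_vecMul_of_vecMul_eq_smul hP hd hf]
  rw [← dotProduct_mulVec, single_dotProduct]

/-- `x ↦ P *ᵥ Pi.single i₀ ((P⁻¹ *ᵥ x) i₀)` is the spectral projection onto the eigenline of the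
simple eigenvalue `d i₀`. -/
theorem mulVec_single_eq_of_eigenvectors (hP : IsUnit P.det) (hd : ∀ j, d j = d i₀ → j = i₀)
    {u f : ι → K} (hu0 : u ≠ 0) (hu : (P * diagonal d * P⁻¹) *ᵥ u = d i₀ • u) (hf0 : f ≠ 0)
    (hf : f ᵥ* (P * diagonal d * P⁻¹) = d i₀ • f) :
    f ⬝ᵥ u ≠ 0 ∧ ∀ x, P *ᵥ Pi.single i₀ ((P⁻¹ *ᵥ x) i₀) = (f ⬝ᵥ x / f ⬝ᵥ u) • u := by
  have ha : (P⁻¹ *ᵥ u) i₀ ≠ 0 := fun h => hu0 <| by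
    rw [eq_mulVec_single_of_mulVec_eq_smul hP hd hu, h, Pi.single_zero, mulVec_zero]
  have hb : (f ᵥ* P) i₀ ≠ 0 := fun h => hf0 <| by
    rw [eq_single_vecMul_of_vecMul_eq_smul hP hd hf, h, Pi.single_zero, zero_vecMul]
  have hfu := dotProduct_eq_mul_of_vecMul_eq_smul hP hd hf u
  refine ⟨hfu ▸ mul_ne_zero hb ha, fun x => ?_⟩
  have hu' := eq_mulVec_single_of_mulVec_eq_smul hP hd hu
  rw [dotProduct_eq_mul_of_vecMul_eq_smul hP hd hf x, hfu]
  set a := (P⁻¹ *ᵥ u) i₀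
  rw [hu', ← mulVec_smul, ← Pi.single_smul', smul_eq_mul]
  congr 2
  field_simp

end Eigenvectors

section Exponential

theorem exp_map_ofReal (A : Matrix ι ι ℝ) :
    (exp A).map Complex.ofReal = exp (A.map Complex.ofReal) :=
  open scoped Norms.Operator in
  map_exp Complex.ofRealHom.mapMatrix (continuous_id.matrix_map Complex.continuous_ofReal) A

variable {𝕂 : Type*} [RCLike 𝕂] {P : Matrix ι ι 𝕂}

theorem exp_mul_mul_nonsing_inv (hP : IsUnit P.det) (A : Matrix ι ι 𝕂) :
    exp (P * A * P⁻¹) = P * exp A * P⁻¹ := by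
  have hPu := (isUnit_iff_isUnit_det P).mpr hP
  simpa only [coe_units_inv, hPu.unit_spec] using exp_units_conj hPu.unit A

theorem exp_nonsing_inv_mul_mul (hP : IsUnit P.det) (A : Matrix ι ι 𝕂) :
    exp (P⁻¹ * A * P) = P⁻¹ * exp A * P := by
  have hPu := (isUnit_iff_isUnit_det P).mpr hP
  simpa only [coe_units_inv, hPu.unit_spec] using exp_units_conj' hPu.unit A

end Exponential

theorem tendsto_exp_smul_mul_diagonal_mulVec {P : Matrix ι ι ℂ} (hP : IsUnit P.det) {d : ι → ℂ}
    {l : ℝ} {i₀ : ι} (hi₀ : d i₀ = l) (hdom : ∀ j ≠ i₀, (d j).re < l) (x : ι → ℂ) :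
    Tendsto (fun t : ℝ => Real.exp (-(l * t)) • (exp (t • (P * diagonal d * P⁻¹)) *ᵥ x)) atTop
      (𝓝 (P *ᵥ Pi.single i₀ ((P⁻¹ *ᵥ x) i₀))) := by
  have hformula : ∀ t : ℝ, Real.exp (-(l * t)) • (exp (t • (P * diagonal d * P⁻¹)) *ᵥ x) =
      P *ᵥ fun k => Complex.exp (t * (d k - l)) * (P⁻¹ *ᵥ x) k := by
    intro t
    rw [← Matrix.smul_mul, ← Matrix.mul_smul, ← diagonal_smul, exp_mul_mul_nonsing_inv hP,
      exp_diagonal, ← mulVec_mulVec, ← mulVec_mulVec, ← mulVec_smul]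
    congr 1
    ext k
    rw [Pi.smul_apply, mulVec_diagonal, Pi.coe_exp, ← Complex.exp_eq_exp_ℂ, Pi.smul_apply,
      Complex.real_smul, Complex.real_smul, ← mul_assoc, Complex.ofReal_exp, ← Complex.exp_add]
    push_cast
    ring_nf
  simp_rw [hformula]
  refine ((continuous_const.matrix_mulVec continuous_id).tendsto _).comp
    (tendsto_pi_nhds.mpr fun k => ?_)
  rcases eq_or_ne k i₀ with rfl | hk
  · simp [hi₀]
  · simpa [hk] using (Complex.tendsto_exp_ofReal_mul_atTop_nhds_zero
      (c := d k - l) (by simpa using hdom k hk)).mul_const ((P⁻¹ *ᵥ x) k)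

theorem tendsto_exp_smul_mulVec_of_eigenvectors {A : Matrix ι ι ℝ} {P : Matrix ι ι ℂ}
    (hP : IsUnit P.det) {d : ι → ℂ} (hA : A.map Complex.ofReal = P * diagonal d * P⁻¹) {l : ℝ}
    {i₀ : ι} (hi₀ : d i₀ = l) (hdom : ∀ j ≠ i₀, (d j).re < l) {v w : ι → ℝ} (hv0 : v ≠ 0)
    (hv : A *ᵥ v = l • v) (hw0 : w ≠ 0) (hw : w ᵥ* A = l • w) :
    w ⬝ᵥ v ≠ 0 ∧ ∀ z, Tendsto (fun t : ℝ => Real.exp (-(l * t)) • (exp (t • A) *ᵥ z)) atTop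
      (𝓝 ((w ⬝ᵥ z / w ⬝ᵥ v) • v)) := by
  have hd : ∀ j, d j = d i₀ → j = i₀ := fun j hj => by
    by_contra hne
    simpa [hj, hi₀] using hdom j hne
  obtain ⟨hwv, hproj⟩ := mulVec_single_eq_of_eigenvectors hP hd
    (u := Complex.ofReal ∘ v) (f := Complex.ofReal ∘ w) (by simpa [funext_iff] using hv0)
    (by rw [← hA, ← ofReal_comp_mulVec, hv, Complex.ofReal_comp_smul, hi₀])
    (by simpa [funext_iff] using hw0)
    (by rw [← hA, ← ofReal_comp_vecMul, hw, Complex.ofReal_comp_smul, hi₀])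
  refine ⟨by exact_mod_cast ofReal_dotProduct w v ▸ hwv, fun z => tendsto_pi_nhds.mpr fun i => ?_⟩
  rw [← Filter.tendsto_ofReal_iff]
  have h := tendsto_pi_nhds.mp
    (tendsto_exp_smul_mul_diagonal_mulVec hP hi₀ hdom (Complex.ofReal ∘ z)) i
  rw [← hA, hproj] at h
  convert h using 2 with t
  · have hmap : (t • A).map Complex.ofReal = t • A.map Complex.ofReal :=
      Matrix.map_smul _ t (fun a => by simp [Complex.real_smul]) A
    change (Complex.ofReal ∘ (Real.exp _ • (exp (t • A) *ᵥ z))) i = _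
    rw [Complex.ofReal_comp_smul, ofReal_comp_mulVec, exp_map_ofReal, hmap, Complex.coe_smul]
  · simp [← ofReal_dotProduct]

theorem exists_conj_tendsto_exp_smul_mulVec_mean {A : Matrix ι ι ℝ} {l : ℝ} {v w : ι → ℝ}
    (hwv : w ⬝ᵥ v ≠ 0)
    (hlim : ∀ z, Tendsto (fun t : ℝ => Real.exp (-(l * t)) • (exp (t • A) *ᵥ z)) atTop
      (𝓝 ((w ⬝ᵥ z / w ⬝ᵥ v) • v))) :
    ∃ S : Matrix ι ι ℝ, IsUnit S.det ∧ ∀ z, Tendsto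
      (fun t : ℝ => Real.exp (-(l * t)) • (exp (t • (S⁻¹ * A * S)) *ᵥ z)) atTop
      (𝓝 fun _ => (∑ i, z i) / Fintype.card ι) := by
  have : Nonempty ι := by
    by_contra h
    simp [not_nonempty_iff.mp h] at hwv
  obtain ⟨S, hS, hSv, hwS⟩ := exists_isUnit_det_mulVec_one_eq_vecMul_eq
    (w' := fun _ => w ⬝ᵥ v / Fintype.card ι) (by simp [dotProduct]; field_simp) hwv
  refine ⟨S, hS, fun z => ?_⟩
  convert ((continuous_const (y := S⁻¹).matrix_mulVec continuous_id).tendsto _).comp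
    (hlim (S *ᵥ z)) using 2 with t
  · rw [Function.comp_apply, id_eq, ← Matrix.smul_mul, ← Matrix.mul_smul,
      exp_nonsing_inv_mul_mul hS, mulVec_smul, mulVec_mulVec, mulVec_mulVec, Matrix.mul_assoc]
  · have hSv' : S⁻¹ *ᵥ v = 1 := by rw [← hSv, mulVec_mulVec, nonsing_inv_mul _ hS, one_mulVec]
    rw [id_eq, mulVec_smul, hSv', dotProduct_mulVec, hwS]
    ext
    simp only [dotProduct, ← Finset.mul_sum, Pi.smul_apply, Pi.one_apply, smul_eq_mul,
      mul_one] at hwv ⊢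
    field_simp

end Matrix

theorem stmt_5_general {n : ℕ} (A : Matrix (Fin n) (Fin n) ℝ)
    (hdiag : ∃ P : Matrix (Fin n) (Fin n) ℂ, IsUnit P.det ∧
      (P⁻¹ * A.map Complex.ofReal * P).IsDiag)
    (l₁ : ℝ) (hroot : (Matrix.charpoly (A.map Complex.ofReal)).IsRoot (l₁ : ℂ))
    (hsimple : Polynomial.rootMultiplicity (l₁ : ℂ)
      (Matrix.charpoly (A.map Complex.ofReal)) = 1)
    (hdom : ∀ μ : ℂ, (Matrix.charpoly (A.map Complex.ofReal)).IsRoot μ → μ ≠ (l₁ : ℂ) →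
      μ.re < l₁) :
    ∃ S : Matrix (Fin n) (Fin n) ℝ, IsUnit S.det ∧
      ∀ z : Fin n → ℝ, 0 ≤ z → ∃ τ₀ : ℝ, 0 ≤ τ₀ ∧ ∀ t : ℝ, τ₀ ≤ t →
        0 ≤ (NormedSpace.exp (t • (S⁻¹ * A * S))).mulVec z := by
  obtain ⟨P, hP, hPdiag⟩ := hdiag
  have hA := eq_mul_diagonal_mul_nonsing_inv_of_isDiag hP hPdiag
  obtain ⟨i₀, hi₀, hdom'⟩ := exists_eq_and_re_lt_of_rootMultiplicity_charpoly_eq_one hP hA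
    hsimple hdom
  have hroot' : A.charpoly.IsRoot l₁ :=
    (isRoot_map_iff (f := Complex.ofRealHom) Complex.ofReal_injective).mp
      (charpoly_map A Complex.ofRealHom ▸ hroot)
  obtain ⟨v, hv0, hv⟩ := exists_mulVec_eq_smul_of_isRoot_charpoly A hroot'
  obtain ⟨w, hw0, hw⟩ := exists_mulVec_eq_smul_of_isRoot_charpoly Aᵀ (charpoly_transpose A ▸ hroot')
  rw [mulVec_transpose] at hw
  obtain ⟨hwv, hlim⟩ := tendsto_exp_smul_mulVec_of_eigenvectors hP hA hi₀ hdom' hv0 hv hw0 hw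
  obtain ⟨S, hS, hlimS⟩ := exists_conj_tendsto_exp_smul_mulVec_mean hwv hlim
  refine ⟨S, hS, fun z hz => ?_⟩
  rcases eq_or_ne z 0 with rfl | hz0
  · exact ⟨0, le_rfl, fun t _ => by simp⟩
  obtain ⟨j, -⟩ := Function.ne_iff.mp hz0
  have hmean : 0 < (∑ i, z i) / Fintype.card (Fin n) :=
    div_pos (Fintype.sum_pos (hz.lt_of_ne' hz0)) (Nat.cast_pos.mpr (Fintype.card_pos_iff.mpr ⟨j⟩))
  obtain ⟨τ, hτ⟩ := eventually_atTop.mp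
    ((hlimS z).eventually_nonneg_of_smul (fun t => Real.exp_pos _) fun _ => hmean)
  exact ⟨max τ 0, le_max_right _ _, fun t ht => hτ t (le_of_max_le_left ht)⟩

/-- If `A` is diagonalizable over `ℂ` and its dominant eigenvalue `λ₁` is simple, real,
negative, with `λ₁ > Re λⱼ` for every other eigenvalue, then there exists an invertible
matrix `S` such that the system `ż = S⁻¹AS z` is eventually positive. -/
theorem stmt_5 {n : ℕ} (A : Matrix (Fin n) (Fin n) ℝ)
    (hdiag : ∃ P : Matrix (Fin n) (Fin n) ℂ, IsUnit P.det ∧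
      (P⁻¹ * A.map Complex.ofReal * P).IsDiag)
    (l₁ : ℝ) (hroot : (Matrix.charpoly (A.map Complex.ofReal)).IsRoot (l₁ : ℂ))
    (hneg : l₁ < 0)
    (hsimple : Polynomial.rootMultiplicity (l₁ : ℂ)
      (Matrix.charpoly (A.map Complex.ofReal)) = 1)
    (hdom : ∀ μ : ℂ, (Matrix.charpoly (A.map Complex.ofReal)).IsRoot μ → μ ≠ (l₁ : ℂ) →
      μ.re < l₁) :
    ∃ S : Matrix (Fin n) (Fin n) ℝ, IsUnit S.det ∧
      ∀ z : Fin n → ℝ, 0 ≤ z → ∃ τ₀ : ℝ, 0 ≤ τ₀ ∧ ∀ t : ℝ, τ₀ ≤ t →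
        0 ≤ (NormedSpace.exp (t • (S⁻¹ * A * S))).mulVec z :=
  stmt_5_general A hdiag l₁ hroot hsimple hdom
end

section
/- Let K be a closed positive cone and let x* ∈ D be an equilibrium of ẋ = f(x) (f(x*) = 0) that is Lyapunov stable (for every ε > 0 there exists δ > 0 such that ‖x − x*‖ < δ implies ‖φ(t,x) − x*‖ < ε for all t ≥ 0) and attractive on its basin B(x*) = { x ∈ D : φ(t,x) → x* as t → ∞ }, which is an open set. Suppose the flow is defined for all t ≥ 0 on D and the system is uniformly eventually monotone on B(x*) with respect to K. Then for all z, w ∈ B(x*) with z ⪯_K w and [z,w]_K ⊆ D, the order-interval [z,w]_K = { y ∈ ℝⁿ : z ⪯_K y ⪯_K w } is contained in B(x*). -/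
/-!
The order interval `I = [z, w]_K` is convex, hence preconnected, and the basin `B` is open, so it
suffices that `I ∩ B` is relatively closed in `I`. For `q ∈ I ∩ B` and `t ≥ τ₀`, eventual
monotonicity gives `φ(t,z) ⪯ φ(t,q) ⪯ φ(t,w)`; a closed salient cone in finite dimension is normal,
so `‖φ(t,q) - φ(t,z)‖ ≤ γ ‖φ(t,w) - φ(t,z)‖`. By continuous dependence on initial data (Grönwall)
this bound passes to every limit point `p ∈ I` of `I ∩ B`, and its right-hand side tends to `0`,
so `φ(t,p) → x*`.
-/

open Set Metric Filter Topology Real NNReal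

namespace ConvexCone

variable {E : Type*} [NormedAddCommGroup E] [NormedSpace ℝ E]

theorem convex_orderInterval (K : ConvexCone ℝ E) (z w : E) :
    Convex ℝ {y | y - z ∈ K ∧ w - y ∈ K} := by
  convert (K.convex.translate_preimage_left (-z)).inter (K.convex.translate_preimage_right w).neg
    using 1
  ext y
  simp [sub_eq_add_neg]

theorem exists_norm_le_mul_norm_add [ProperSpace E] (K : ConvexCone ℝ E)
    (hK : IsClosed (K : Set E)) (hKs : K.Salient) :
    ∃ γ : ℝ, ∀ a ∈ K, ∀ b ∈ K, ‖a‖ ≤ γ * ‖a + b‖ := by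
  have normalize_mem {a : E} (ha : a ∈ K) (ha0 : a ≠ 0) : ‖a‖⁻¹ • a ∈ sphere (0 : E) 1 ∩ K :=
    ⟨by simp [norm_smul, ha0], K.smul_mem (by positivity) ha⟩
  rcases (sphere (0 : E) 1 ∩ K).eq_empty_or_nonempty with hS | hS
  · refine ⟨0, fun a ha b _ => ?_⟩
    by_cases ha0 : a = 0
    · simp [ha0]
    · exact absurd (normalize_mem ha ha0) (hS ▸ notMem_empty _)
  -- `a ↦ infDist (-a) K` attains a positive minimum on the compact set of unit vectors of `K`
  obtain ⟨u, ⟨hu1, huK⟩, hmin⟩ := ((isCompact_sphere 0 1).inter_right hK).exists_isMinOn hS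
    ((continuous_infDist_pt (K : Set E)).comp continuous_neg).continuousOn
  have hm : 0 < infDist (-u) K :=
    (hK.notMem_iff_infDist_pos ⟨u, huK⟩).1 (hKs u huK (ne_zero_of_mem_unit_sphere ⟨u, hu1⟩))
  refine ⟨(infDist (-u) K)⁻¹, fun a ha b hb => ?_⟩
  by_cases ha0 : a = 0
  · simp only [ha0, norm_zero]
    positivity
  have hna : 0 < ‖a‖ := norm_pos_iff.2 ha0
  have key : infDist (-u) K ≤ ‖a‖⁻¹ * ‖a + b‖ := calc
    infDist (-u) K ≤ infDist (-(‖a‖⁻¹ • a)) K := hmin (normalize_mem ha ha0)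
    _ ≤ dist (-(‖a‖⁻¹ • a)) (‖a‖⁻¹ • b) :=
      infDist_le_dist_of_mem (K.smul_mem (inv_pos.2 hna) hb)
    _ = ‖a‖⁻¹ * ‖a + b‖ := by
      rw [dist_eq_norm, ← neg_add', norm_neg, ← smul_add, norm_smul, norm_inv, norm_norm]
  rw [inv_mul_eq_div, le_div_iff₀ hna] at key
  rw [inv_mul_eq_div, le_div_iff₀ hm]
  linarith

theorem exists_norm_sub_le_mul_norm_sub [ProperSpace E] (K : ConvexCone ℝ E)
    (hK : IsClosed (K : Set E)) (hKs : K.Salient) :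
    ∃ γ : ℝ, ∀ a b c : E, b - a ∈ K → c - b ∈ K → ‖b - a‖ ≤ γ * ‖c - a‖ := by
  obtain ⟨γ, hγ⟩ := K.exists_norm_le_mul_norm_add hK hKs
  exact ⟨γ, fun a b c hab hbc => by simpa using hγ _ hab _ hbc⟩

end ConvexCone

theorem IsPreconnected.subset_of_closure_inter_subset' {X : Type*} [TopologicalSpace X]
    {s u : Set X} (hs : IsPreconnected s) (hu : IsOpen u) (h'u : (s ∩ u).Nonempty)
    (h : closure (s ∩ u) ∩ s ⊆ u) : s ⊆ u := by
  intro y hy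
  by_contra hyu
  obtain ⟨x, hxs, hxu, hxc⟩ := hs u (closure (s ∩ u))ᶜ hu isClosed_closure.isOpen_compl
    (fun x hx => or_iff_not_imp_left.2 fun hxu hxc => hxu (h ⟨hxc, hx⟩)) h'u
    ⟨y, hy, fun hyc => hyu (h ⟨hyc, hy⟩)⟩
  exact hxc (subset_closure ⟨hxs, hxu⟩)

theorem tendsto_of_mem_closure_of_norm_sub_le {E : Type*} [NormedAddCommGroup E]
    {F : ℝ → E → E} {s : Set E} {p z w xs : E}
    {γ τ₀ : ℝ} (hp : p ∈ closure s) (hcont : ∀ t ≥ τ₀, ContinuousWithinAt (F t) s p)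
    (hbound : ∀ t ≥ τ₀, ∀ q ∈ s, ‖F t q - F t z‖ ≤ γ * ‖F t w - F t z‖)
    (hz : Tendsto (F · z) atTop (𝓝 xs)) (hw : Tendsto (F · w) atTop (𝓝 xs)) :
    Tendsto (F · p) atTop (𝓝 xs) := by
  have hp_bound : ∀ t ≥ τ₀, ‖F t p - F t z‖ ≤ γ * ‖F t w - F t z‖ := fun t ht =>
    ((hcont t ht).sub continuousWithinAt_const).norm.closure_le hp continuousWithinAt_const
      (hbound t ht)
  have hwz : Tendsto (fun t => γ * ‖F t w - F t z‖) atTop (𝓝 0) := by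
    simpa using ((hw.sub hz).norm).const_mul γ
  simpa using (squeeze_zero_norm' (eventually_atTop.2 ⟨τ₀, hp_bound⟩) hwz).add hz

section Flow

variable {E : Type*} [NormedAddCommGroup E] [NormedSpace ℝ E]

theorem ContDiffOn.locallyLipschitzOn_of_isOpen {F : Type*} [NormedAddCommGroup F]
    [NormedSpace ℝ F] {D : Set E} {f : E → F} (hD : IsOpen D) (hf : ContDiffOn ℝ 1 f D) :
    LocallyLipschitzOn D f := fun x hx => by
  obtain ⟨L, t, ht, hL⟩ := (hf.contDiffAt (hD.mem_nhds hx)).exists_lipschitzOnWith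
  exact ⟨L, t, nhdsWithin_le_nhds ht, hL⟩

theorem dist_lt_of_trajectories_ODE_of_lipschitzOnWith_closedBall {f : E → E} {γ₁ γ₂ : ℝ → E}
    {T ρ : ℝ} {L : ℝ≥0} (h₁ : ∀ t ∈ Icc 0 T, HasDerivAt γ₁ (f (γ₁ t)) t)
    (h₂ : ∀ t ∈ Icc 0 T, HasDerivAt γ₂ (f (γ₂ t)) t)
    (hL : ∀ t ∈ Icc 0 T, LipschitzOnWith L f (closedBall (γ₂ t) ρ))
    (h0 : dist (γ₁ 0) (γ₂ 0) * exp (L * T) < ρ) :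
    ∀ t ∈ Icc 0 T, dist (γ₁ t) (γ₂ t) < ρ := by
  have hρ : 0 ≤ ρ := (mul_nonneg dist_nonneg (exp_pos _).le).trans h0.le
  have hcont : ContinuousOn (fun t => dist (γ₁ t) (γ₂ t)) (Icc 0 T) := fun t ht =>
    (h₁ t ht).continuousAt.continuousWithinAt.dist (h₂ t ht).continuousAt.continuousWithinAt
  by_contra! hexit
  -- the first time at which the two solutions are `ρ` apart
  set S := Icc 0 T ∩ (fun t => dist (γ₁ t) (γ₂ t)) ⁻¹' Ici ρ
  have hS : IsClosed S := hcont.preimage_isClosed_of_isClosed isClosed_Icc isClosed_Ici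
  obtain ⟨t, ht, hρt⟩ := hexit
  obtain ⟨⟨ht₁0, ht₁T⟩, hρt₁⟩ : sInf S ∈ S := hS.csInf_mem ⟨t, ht, hρt⟩ ⟨0, fun s hs => hs.1.1⟩
  have hsub : Icc 0 (sInf S) ⊆ Icc 0 T := Icc_subset_Icc_right ht₁T
  have hclose : ∀ s ∈ Ico 0 (sInf S), γ₁ s ∈ closedBall (γ₂ s) ρ := fun s hs => by
    have : s ∉ S := notMem_of_lt_csInf hs.2 ⟨0, fun s hs => hs.1.1⟩
    exact mem_closedBall.2 (not_le.1 fun h => this ⟨hsub (Ico_subset_Icc_self hs), h⟩).le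
  have gronwall := dist_le_of_trajectories_ODE_of_mem (v := fun _ => f)
    (fun s hs => hL s (hsub (Ico_subset_Icc_self hs)))
    (fun s hs => (h₁ s (hsub hs)).continuousAt.continuousWithinAt)
    (fun s hs => (h₁ s (hsub (Ico_subset_Icc_self hs))).hasDerivWithinAt) hclose
    (fun s hs => (h₂ s (hsub hs)).continuousAt.continuousWithinAt)
    (fun s hs => (h₂ s (hsub (Ico_subset_Icc_self hs))).hasDerivWithinAt)
    (fun s _ => mem_closedBall_self hρ) le_rfl (sInf S) ⟨ht₁0, le_rfl⟩
  have : dist (γ₁ 0) (γ₂ 0) * exp (L * (sInf S - 0)) ≤ dist (γ₁ 0) (γ₂ 0) * exp (L * T) := by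
    gcongr
    linarith
  exact (h0.trans_le hρt₁).not_ge (gronwall.trans this)

theorem continuousOn_flow [ProperSpace E] {D : Set E} {f : E → E} {φ : ℝ → E → E}
    (hD : IsOpen D) (hf : ContDiffOn ℝ 1 f D) (hφ0 : ∀ x ∈ D, φ 0 x = x)
    (hφD : ∀ t : ℝ, 0 ≤ t → ∀ x ∈ D, φ t x ∈ D)
    (hφ' : ∀ x ∈ D, ∀ t : ℝ, 0 ≤ t → HasDerivAt (fun τ => φ τ x) (f (φ t x)) t)
    {T : ℝ} (hT : 0 ≤ T) : ContinuousOn (φ T) D := by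
  intro y hy
  refine Metric.continuousWithinAt_iff.2 fun e he => ?_
  set Γ := (φ · y) '' Icc 0 T
  have hΓ : IsCompact Γ := isCompact_Icc.image_of_continuousOn fun t ht =>
    (hφ' y hy t ht.1).continuousAt.continuousWithinAt
  obtain ⟨ε, hε, hΓD⟩ := hΓ.exists_cthickening_subset_open hD (by
    rintro _ ⟨t, ht, rfl⟩
    exact hφD t ht.1 y hy)
  obtain ⟨L, hL⟩ :=
    ((hf.locallyLipschitzOn_of_isOpen hD).mono hΓD).exists_lipschitzOnWith_of_compact
      hΓ.cthickening
  set ρ := min ε e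
  have hρ : 0 < ρ := lt_min hε he
  refine ⟨ρ * exp (-(L * T)), by positivity, fun x hx hxy => ?_⟩
  refine (dist_lt_of_trajectories_ODE_of_lipschitzOnWith_closedBall (γ₁ := (φ · x))
    (fun t ht => hφ' x hx t ht.1) (fun t ht => hφ' y hy t ht.1)
    (fun t ht => hL.mono ((closedBall_subset_closedBall (min_le_left ε e)).trans
      (closedBall_subset_cthickening (mem_image_of_mem (φ · y) ht) ε))) ?_ T
    ⟨hT, le_rfl⟩).trans_le (min_le_right ε e)
  calc dist (φ 0 x) (φ 0 y) * exp (L * T) < ρ * exp (-(L * T)) * exp (L * T) := by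
        rw [hφ0 x hx, hφ0 y hy]
        gcongr
    _ = ρ := by rw [mul_assoc, ← exp_add, neg_add_cancel, exp_zero, mul_one]

end Flow

theorem stmt_10_general {n : ℕ} (D : Set (Fin n → ℝ)) (hD : IsOpen D)
    (f : (Fin n → ℝ) → (Fin n → ℝ)) (hf : ContDiffOn ℝ 1 f D)
    (φ : ℝ → (Fin n → ℝ) → (Fin n → ℝ))
    (hφ0 : ∀ x ∈ D, φ 0 x = x)
    (hφD : ∀ t : ℝ, 0 ≤ t → ∀ x ∈ D, φ t x ∈ D)
    (hφ' : ∀ x ∈ D, ∀ t : ℝ, 0 ≤ t → HasDerivAt (fun τ => φ τ x) (f (φ t x)) t)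
    (K : Set (Fin n → ℝ)) (hKclosed : IsClosed K)
    (hKscale : ∀ c : ℝ, 0 ≤ c → ∀ x ∈ K, c • x ∈ K)
    (hKadd : ∀ x ∈ K, ∀ y ∈ K, x + y ∈ K)
    (hKpointed : ∀ x ∈ K, -x ∈ K → x = 0)
    (xs : Fin n → ℝ)
    (B : Set (Fin n → ℝ))
    (hB : B = {x ∈ D | Filter.Tendsto (fun t : ℝ => φ t x) Filter.atTop (nhds xs)})
    (hBopen : IsOpen B)
    (τ₀ : ℝ) (hτ₀ : 0 ≤ τ₀)
    (hmon : ∀ x ∈ B, ∀ y ∈ B, x - y ∈ K → ∀ t : ℝ, τ₀ ≤ t → φ t x - φ t y ∈ K) :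
    ∀ z ∈ B, ∀ w ∈ B, w - z ∈ K →
      {y : Fin n → ℝ | y - z ∈ K ∧ w - y ∈ K} ⊆ D →
      {y : Fin n → ℝ | y - z ∈ K ∧ w - y ∈ K} ⊆ B := by
  intro z hz w hw hwz hID
  subst hB
  let Kc : ConvexCone ℝ (Fin n → ℝ) := ⟨K, fun c hc x hx => hKscale c hc.le x hx, hKadd⟩
  obtain ⟨γ, hγ⟩ := Kc.exists_norm_sub_le_mul_norm_sub hKclosed
    fun x hx hx0 hnx => hx0 (hKpointed x hx hnx)
  have hzz : z - z ∈ K := by simpa using hKscale 0 le_rfl _ hwz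
  refine (Kc.convex_orderInterval z w).isPreconnected.subset_of_closure_inter_subset' hBopen
    ⟨z, ⟨hzz, hwz⟩, hz⟩ ?_
  rintro p ⟨hpcl, hpI⟩
  refine ⟨hID hpI, tendsto_of_mem_closure_of_norm_sub_le hpcl (τ₀ := τ₀)
    (fun t ht => (continuousOn_flow hD hf hφ0 hφD hφ' (hτ₀.trans ht) p (hID hpI)).mono
      fun q hq => hID hq.1)
    (fun t ht q hq => hγ _ _ _ (hmon q hq.2 z hz hq.1.1 t ht) (hmon w hw q hq.2 hq.1.2 t ht))
    hz.2 hw.2⟩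

/-- For a uniformly eventually monotone system on the (open) basin of attraction `B(x*)` of a
Lyapunov-stable, attractive equilibrium `x*`, order-intervals between points of the basin
(contained in the domain) are contained in the basin. -/
theorem stmt_10 {n : ℕ} (D : Set (Fin n → ℝ)) (hD : IsOpen D)
    (f : (Fin n → ℝ) → (Fin n → ℝ)) (hf : ContDiffOn ℝ 1 f D)
    (φ : ℝ → (Fin n → ℝ) → (Fin n → ℝ))
    (hφ0 : ∀ x ∈ D, φ 0 x = x)
    (hφD : ∀ t : ℝ, 0 ≤ t → ∀ x ∈ D, φ t x ∈ D)
    (hφ' : ∀ x ∈ D, ∀ t : ℝ, 0 ≤ t → HasDerivAt (fun τ => φ τ x) (f (φ t x)) t)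
    (K : Set (Fin n → ℝ)) (hKclosed : IsClosed K)
    (hKscale : ∀ c : ℝ, 0 ≤ c → ∀ x ∈ K, c • x ∈ K)
    (hKadd : ∀ x ∈ K, ∀ y ∈ K, x + y ∈ K)
    (hKpointed : ∀ x ∈ K, -x ∈ K → x = 0)
    (xs : Fin n → ℝ) (hxs : xs ∈ D) (heq : f xs = 0)
    (hstable : ∀ ε : ℝ, 0 < ε → ∃ δ : ℝ, 0 < δ ∧ ∀ x ∈ D, ‖x - xs‖ < δ →
      ∀ t : ℝ, 0 ≤ t → ‖φ t x - xs‖ < ε)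
    (B : Set (Fin n → ℝ))
    (hB : B = {x ∈ D | Filter.Tendsto (fun t : ℝ => φ t x) Filter.atTop (nhds xs)})
    (hBopen : IsOpen B)
    (τ₀ : ℝ) (hτ₀ : 0 ≤ τ₀)
    (hmon : ∀ x ∈ B, ∀ y ∈ B, x - y ∈ K → ∀ t : ℝ, τ₀ ≤ t → φ t x - φ t y ∈ K) :
    ∀ z ∈ B, ∀ w ∈ B, w - z ∈ K →
      {y : Fin n → ℝ | y - z ∈ K ∧ w - y ∈ K} ⊆ D →
      {y : Fin n → ℝ | y - z ∈ K ∧ w - y ∈ K} ⊆ B :=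
  stmt_10_general D hD f hf φ hφ0 hφD hφ' K hKclosed hKscale hKadd hKpointed xs B hB hBopen τ₀ hτ₀
    hmon
end
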